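/- arXiv:2112.10351 — 2 statements merged into one kernel-verified Lean document; each statement's English description precedes it below -/
import Mathlib

section
/- Let λ > 0 and let M be a Poisson random variable with rate λ, i.e., P(M = m) = e^{-λ} λ^m / m! for m = 0, 1, 2, .... Then E[1/√(M+1)] ≤ √((1 - e^{-λ})/λ); equivalently, ∑_{m=0}^∞ (e^{-λ} λ^m / m!) · (m+1)^{-1/2} ≤ √((1 - e^{-λ})/λ). -/
/-!
Write `p m = e^{-λ} λ^m / m!`. By Cauchy–Schwarz with weights `p m`,
`∑ p m (m+1)^{-1/2} ≤ (∑ p m)^{1/2} (∑ p m / (m+1))^{1/2}`; the first sum is `1`, and since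
`λ^m / (m! (m+1)) = λ^{m+1} / ((m+1)! λ)` the second is `e^{-λ} (e^λ - 1) / λ = (1 - e^{-λ}) / λ`.
-/

open Real

theorem tsum_mul_sqrt_le_sqrt_mul_sqrt {ι : Type*} {w x : ι → ℝ} {a b : ℝ}
    (hw : ∀ i, 0 ≤ w i) (hx : ∀ i, 0 ≤ x i)
    (hwa : HasSum w a) (hwxb : HasSum (fun i => w i * x i) b) :
    ∑' i, w i * √(x i) ≤ √a * √b := by
  have hwx : ∀ i, 0 ≤ w i * x i := fun i => mul_nonneg (hw i) (hx i)
  have hpq : (2 : ℝ).HolderConjugate 2 := .two_two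
  have hsq : ∀ {c : ℝ}, 0 ≤ c → √c ^ (2 : ℝ) = c := fun hc => by
    rw [rpow_two, sq_sqrt hc]
  have key := inner_le_Lp_mul_Lq_tsum_of_nonneg hpq (f := fun i => √(w i))
    (g := fun i => √(w i * x i)) (fun _ => sqrt_nonneg _) (fun _ => sqrt_nonneg _)
    (by simpa only [hsq (hw _)] using hwa.summable)
    (by simpa only [hsq (hwx _)] using hwxb.summable)
  simp only [hsq (hw _), hsq (hwx _), hwa.tsum_eq, hwxb.tsum_eq, ← sqrt_eq_rpow] at key
  convert key using 3 with i
  rw [sqrt_mul (hw i), ← mul_assoc, mul_self_sqrt (hw i)]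

theorem hasSum_pow_div_factorial_mul_inv_succ {l : ℝ} (hl : l ≠ 0) :
    HasSum (fun m : ℕ => l ^ m / m.factorial * ((m : ℝ) + 1)⁻¹) ((exp l - 1) / l) := by
  have htail : HasSum (fun m : ℕ => l ^ (m + 1) / (m + 1).factorial) (exp l - 1) := by
    have := (hasSum_nat_add_iff' 1).mpr (NormedSpace.expSeries_div_hasSum_exp l)
    simpa [← exp_eq_exp_ℝ] using this
  refine (htail.div_const l).congr_fun fun m => ?_
  rw [Nat.factorial_succ]
  push_cast
  field_simp
  ring

/-- For `M ~ Poisson(λ)` with `λ > 0`, `E[1/√(M+1)] ≤ √((1 - e^{-λ})/λ)`. -/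
theorem poisson_inv_sqrt_succ_expectation_le (l : ℝ) (hl : 0 < l) :
    (∑' m : ℕ, Real.exp (-l) * l ^ m / (Nat.factorial m) * (1 / Real.sqrt ((m : ℝ) + 1)))
      ≤ Real.sqrt ((1 - Real.exp (-l)) / l) := by
  have hmass : HasSum (fun m : ℕ => exp (-l) * l ^ m / m.factorial) 1 :=
    ProbabilityTheory.hasSum_one_poissonMeasure ⟨l, hl.le⟩
  have hmean : HasSum (fun m : ℕ => exp (-l) * l ^ m / m.factorial * ((m : ℝ) + 1)⁻¹)
      ((1 - exp (-l)) / l) := by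
    have hvalue : exp (-l) * ((exp l - 1) / l) = (1 - exp (-l)) / l := by
      rw [mul_div_assoc', mul_sub, ← exp_add, neg_add_cancel, exp_zero, mul_one]
    exact hvalue ▸ ((hasSum_pow_div_factorial_mul_inv_succ hl.ne').mul_left (exp (-l))).congr_fun
      fun m => by ring
  have hCS := tsum_mul_sqrt_le_sqrt_mul_sqrt (fun m => by positivity) (fun m => by positivity)
    hmass hmean
  simpa only [sqrt_inv, one_div, sqrt_one, one_mul] using hCS
end

section
/- Let d ≥ 1, let m : Fin d → ℕ with m_j ≥ 1 for every j, let w : ∏_j {0, 1, …, m_j − 1} → ℝ and θ : ∏_j {0, 1, …, m_j} → ℝ. Then ∫_{[0,1]^d} [∑_{k_1=0}^{m_1−1} ⋯ ∑_{k_d=0}^{m_d−1} w(k) ∏_{j=1}^d m_j C(m_j − 1, k_j) u_j^{k_j} (1 − u_j)^{m_j − k_j − 1}] · [∑_{l_1=0}^{m_1} ⋯ ∑_{l_d=0}^{m_d} θ(l) ∏_{j=1}^d C(m_j, l_j) u_j^{l_j} (1 − u_j)^{m_j − l_j}] du = ∑_{k} ∑_{l} w(k) θ(l) ∏_{j=1}^d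 m_j C(m_j − 1, k_j) C(m_j, l_j) B(k_j + l_j + 1, 2 m_j − k_j − l_j), where B is the Beta function. (This yields the closed-form estimator of multivariate Kendall's tau based on the empirical checkerboard Bernstein copula.) -/
/-! Both sums expand into a double sum of separable integrands, each of which integrates to a
product of one-dimensional integrals (Fubini on a box). In one variable the product of the two
Bernstein monomials is `t ^ (k + l) * (1 - t) ^ (2m - k - l - 1)` up to constants, whose integral
is `B(k + l + 1, 2m - k - l)`. -/

open Finset MeasureTheory

/-- The Beta function `B(a, b) = ∫_0^1 t^(a-1) (1-t)^(b-1) dt`. -/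
noncomputable def betaFn (a b : ℝ) : ℝ :=
  ∫ t in (0 : ℝ)..1, t ^ (a - 1) * (1 - t) ^ (b - 1)

section Pi

variable {𝕜 ι : Type*} [RCLike 𝕜] [Fintype ι] {E : ι → Type*} [∀ i, MeasurableSpace (E i)]
  {μ : ∀ i, Measure (E i)} [∀ i, SigmaFinite (μ i)]

theorem setIntegral_univ_pi_prod (s : ∀ i, Set (E i)) (f : ∀ i, E i → 𝕜) :
    ∫ x in Set.univ.pi s, ∏ i, f i (x i) ∂Measure.pi μ = ∏ i, ∫ y in s i, f i y ∂μ i := by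
  rw [Measure.restrict_pi_pi]
  exact integral_fintype_prod_eq_prod f

theorem integrableOn_univ_pi_prod {s : ∀ i, Set (E i)} {f : ∀ i, E i → 𝕜}
    (hf : ∀ i, IntegrableOn (f i) (s i) (μ i)) :
    IntegrableOn (fun x ↦ ∏ i, f i (x i)) (Set.univ.pi s) (Measure.pi μ) := by
  rw [IntegrableOn, Measure.restrict_pi_pi]
  exact Integrable.fintype_prod_dep hf

theorem setIntegral_univ_pi_sum_prod_mul_sum_prod [DecidableEq ι]
    {K L : ι → Type*} [∀ i, Fintype (K i)] [∀ i, Fintype (L i)]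
    (s : ∀ i, Set (E i)) (f : ∀ i, K i → E i → 𝕜) (g : ∀ i, L i → E i → 𝕜)
    (hfg : ∀ i a b, IntegrableOn (fun y ↦ f i a y * g i b y) (s i) (μ i))
    (w : (∀ i, K i) → 𝕜) (θ : (∀ i, L i) → 𝕜) :
    ∫ x in Set.univ.pi s,
        (∑ k, w k * ∏ i, f i (k i) (x i)) * (∑ l, θ l * ∏ i, g i (l i) (x i)) ∂Measure.pi μ
      = ∑ k, ∑ l, w k * θ l * ∏ i, ∫ y in s i, f i (k i) y * g i (l i) y ∂μ i := by
  have separate : ∀ k l (x : ∀ i, E i),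
      (w k * ∏ i, f i (k i) (x i)) * (θ l * ∏ i, g i (l i) (x i))
        = w k * θ l * ∏ i, f i (k i) (x i) * g i (l i) (x i) := fun k l x ↦ by
    rw [mul_mul_mul_comm, ← prod_mul_distrib]
  have integrable : ∀ k l, IntegrableOn
      (fun x ↦ w k * θ l * ∏ i, f i (k i) (x i) * g i (l i) (x i))
      (Set.univ.pi s) (Measure.pi μ) := fun k l ↦
    (integrableOn_univ_pi_prod fun i ↦ hfg i (k i) (l i)).const_mul _
  simp_rw [sum_mul_sum, separate]
  rw [integral_finsetSum _ fun k _ ↦ integrable_finsetSum _ fun l _ ↦ integrable k l]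
  refine sum_congr rfl fun k _ ↦ ?_
  rw [integral_finsetSum _ fun l _ ↦ integrable k l]
  refine sum_congr rfl fun l _ ↦ ?_
  rw [integral_const_mul, setIntegral_univ_pi_prod s fun i y ↦ f i (k i) y * g i (l i) y]

end Pi

theorem betaFn_natCast_add_one (a b : ℕ) :
    betaFn (a + 1) (b + 1) = ∫ t in (0 : ℝ)..1, t ^ a * (1 - t) ^ b := by
  simp only [betaFn, add_sub_cancel_right, Real.rpow_natCast]

theorem integral_bernsteinDensity_mul_bernstein {n k l : ℕ} (hk : k < n) (hl : l ≤ n) :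
    ∫ x in Set.Icc (0 : ℝ) 1,
        ((n : ℝ) * ((n - 1).choose k : ℝ) * x ^ k * (1 - x) ^ (n - k - 1)) *
        ((n.choose l : ℝ) * x ^ l * (1 - x) ^ (n - l))
      = (n : ℝ) * ((n - 1).choose k : ℝ) * (n.choose l : ℝ) *
          betaFn ((k : ℝ) + (l : ℝ) + 1) (2 * (n : ℝ) - (k : ℝ) - (l : ℝ)) := by
  have exponents : 2 * (n : ℝ) - k - l = ((n - k - 1 + (n - l) : ℕ) : ℝ) + 1 := by
    have : 1 ≤ n - k := by omega
    push_cast [Nat.cast_sub hl, Nat.cast_sub hk.le, Nat.cast_sub this]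
    ring
  rw [exponents, ← Nat.cast_add, betaFn_natCast_add_one, integral_Icc_eq_integral_Ioc,
    ← intervalIntegral.integral_of_le zero_le_one, ← intervalIntegral.integral_const_mul]
  congr 1 with x
  ring

theorem integral_multiBernstein_density_mul_copula_general
    (d : ℕ) (m : Fin d → ℕ)
    (w : (∀ j, Fin (m j)) → ℝ) (θ : (∀ j, Fin (m j + 1)) → ℝ) :
    (∫ u in Set.univ.pi (fun _ : Fin d => Set.Icc (0 : ℝ) 1),
        (∑ k : (∀ j, Fin (m j)),
            w k * ∏ j, (m j : ℝ) * ((m j - 1).choose (k j) : ℝ) *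
              u j ^ (k j : ℕ) * (1 - u j) ^ (m j - (k j : ℕ) - 1)) *
        (∑ l : (∀ j, Fin (m j + 1)),
            θ l * ∏ j, ((m j).choose (l j) : ℝ) *
              u j ^ (l j : ℕ) * (1 - u j) ^ (m j - (l j : ℕ))))
      = ∑ k : (∀ j, Fin (m j)), ∑ l : (∀ j, Fin (m j + 1)),
          w k * θ l * ∏ j, (m j : ℝ) * ((m j - 1).choose (k j) : ℝ) *
            ((m j).choose (l j) : ℝ) *
            betaFn (((k j : ℕ) : ℝ) + ((l j : ℕ) : ℝ) + 1)
              (2 * (m j : ℝ) - ((k j : ℕ) : ℝ) - ((l j : ℕ) : ℝ)) := by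
  refine (setIntegral_univ_pi_sum_prod_mul_sum_prod (μ := fun _ ↦ volume) _
    (fun j (a : Fin (m j)) x ↦
      (m j : ℝ) * ((m j - 1).choose a : ℝ) * x ^ (a : ℕ) * (1 - x) ^ (m j - (a : ℕ) - 1))
    (fun j (b : Fin (m j + 1)) x ↦ ((m j).choose b : ℝ) * x ^ (b : ℕ) * (1 - x) ^ (m j - (b : ℕ)))
    (fun j a b ↦ (by fun_prop : Continuous _).integrableOn_Icc) w θ).trans ?_
  refine sum_congr rfl fun k _ ↦ sum_congr rfl fun l _ ↦ ?_
  congr 1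
  exact prod_congr rfl fun j _ ↦
    integral_bernsteinDensity_mul_bernstein (k j).isLt (Nat.lt_succ_iff.mp (l j).isLt)

/-- The integral over the unit cube of the product of a Bernstein density (with
coefficients `w`) and a Bernstein copula (with coefficients `θ`) is a double sum of
products of Beta functions; this yields the closed-form estimator of multivariate
Kendall's tau based on the ECBC. -/
theorem integral_multiBernstein_density_mul_copula
    (d : ℕ) (hd : 1 ≤ d) (m : Fin d → ℕ) (hm : ∀ j, 1 ≤ m j)
    (w : (∀ j, Fin (m j)) → ℝ) (θ : (∀ j, Fin (m j + 1)) → ℝ) :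
    (∫ u in Set.univ.pi (fun _ : Fin d => Set.Icc (0 : ℝ) 1),
        (∑ k : (∀ j, Fin (m j)),
            w k * ∏ j, (m j : ℝ) * ((m j - 1).choose (k j) : ℝ) *
              u j ^ (k j : ℕ) * (1 - u j) ^ (m j - (k j : ℕ) - 1)) *
        (∑ l : (∀ j, Fin (m j + 1)),
            θ l * ∏ j, ((m j).choose (l j) : ℝ) *
              u j ^ (l j : ℕ) * (1 - u j) ^ (m j - (l j : ℕ))))
      = ∑ k : (∀ j, Fin (m j)), ∑ l : (∀ j, Fin (m j + 1)),
          w k * θ l * ∏ j, (m j : ℝ) * ((m j - 1).choose (k j) : ℝ) *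
            ((m j).choose (l j) : ℝ) *
            betaFn (((k j : ℕ) : ℝ) + ((l j : ℕ) : ℝ) + 1)
              (2 * (m j : ℝ) - ((k j : ℕ) : ℝ) - ((l j : ℕ) : ℝ)) :=
  integral_multiBernstein_density_mul_copula_general d m w θ
end
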